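/- Let S be a *-semigroup, a ∈ S and k a positive integer. Then a is *-DMP if and only if a^k is *-DMP. -/
import Mathlib


variable {S : Type*}

/-- `spow a m` is `a^m` for `m ≥ 1` in a semigroup (junk value `a` at `m = 0`). -/
def spow [Semigroup S] (a : S) : ℕ → S
  | 0 => a
  | 1 => a
  | (n + 2) => spow a (n + 1) * a

/-- `x` is a `{1,3}`-inverse of `a`. -/
def Is13Inv [Semigroup S] [StarMul S] (a x : S) : Prop :=
  a * x * a = a ∧ star (a * x) = a * x

/-- `x` is the Moore–Penrose inverse of `a`. -/
def IsMPInv [Semigroup S] [StarMul S] (a x : S) : Prop :=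
  a * x * a = a ∧ x * a * x = x ∧ star (a * x) = a * x ∧ star (x * a) = x * a

/-- `x` is the group inverse of `a`. -/
def IsGroupInv [Semigroup S] (a x : S) : Prop :=
  a * x * a = a ∧ x * a * x = x ∧ a * x = x * a

/-- `a` is EP: the group inverse and Moore–Penrose inverse of `a` exist and coincide. -/
def IsEP [Semigroup S] [StarMul S] (a : S) : Prop :=
  ∃ x, IsGroupInv a x ∧ IsMPInv a x

/-- `a` is *-DMP with index `m`: `m` is the smallest positive integer with `a^m` EP. -/
def IsStarDMPWithIndex [Semigroup S] [StarMul S] (a : S) (m : ℕ) : Prop :=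
  0 < m ∧ IsEP (spow a m) ∧ ∀ k, 0 < k → IsEP (spow a k) → m ≤ k

/-- The defining equations of a Drazin inverse `x` of `a` relative to the exponent `m`. -/
def DrazinEqs [Semigroup S] (a x : S) (m : ℕ) : Prop :=
  spow a m * x * a = spow a m ∧ x * a * x = x ∧ a * x = x * a

/-- `x` is the Drazin inverse of `a` with (minimal) index `m`. -/
def IsDrazinWithIndex [Semigroup S] (a x : S) (m : ℕ) : Prop :=
  0 < m ∧ DrazinEqs a x m ∧ ∀ k, 0 < k → (∃ y, DrazinEqs a y k) → m ≤ k

/-- The defining equations of a pseudo core inverse `x` of `a` relative to the exponent `m`. -/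
def PCoreEqs [Semigroup S] [StarMul S] (a x : S) (m : ℕ) : Prop :=
  x * spow a (m + 1) = spow a m ∧ a * (x * x) = x ∧ star (a * x) = a * x

/-- `x` is the pseudo core inverse of `a` with (minimal) index `m`. -/
def IsPCoreWithIndex [Semigroup S] [StarMul S] (a x : S) (m : ℕ) : Prop :=
  0 < m ∧ PCoreEqs a x m ∧ ∀ k y, 0 < k → PCoreEqs a y k → m ≤ k

/-- The defining equations of a dual pseudo core inverse `x` of `a` relative to exponent `m`. -/
def DPCoreEqs [Semigroup S] [StarMul S] (a x : S) (m : ℕ) : Prop :=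
  spow a (m + 1) * x = spow a m ∧ x * x * a = x ∧ star (x * a) = x * a

/-- `x` is the dual pseudo core inverse of `a` with (minimal) index `m`. -/
def IsDPCoreWithIndex [Semigroup S] [StarMul S] (a x : S) (m : ℕ) : Prop :=
  0 < m ∧ DPCoreEqs a x m ∧ ∀ k y, 0 < k → DPCoreEqs a y k → m ≤ k

/-- `a` is *-DMP: some positive power of `a` is EP. -/
def IsStarDMP [Semigroup S] [StarMul S] (a : S) : Prop :=
  ∃ m, 0 < m ∧ IsEP (spow a m)


lemma spow_succ' [Semigroup S] (a : S) (n : ℕ) (hn : 0 < n) :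
    spow a (n + 1) = spow a n * a := by
  cases n with
  | zero => omega
  | succ m => rfl

lemma spow_add' [Semigroup S] (a : S) (m n : ℕ) (hm : 0 < m) (hn : 0 < n) :
    spow a (m + n) = spow a m * spow a n := by
  induction n with
  | zero => omega
  | succ n ih =>
    cases Nat.eq_zero_or_pos n with
    | inl h => subst h; exact spow_succ' a m hm
    | inr h =>
      rw [show m + (n+1) = (m+n) + 1 by omega, spow_succ' a (m+n) (by omega),
        ih h, spow_succ' a n h, mul_assoc]

lemma spow_spow [Semigroup S] (a : S) (k m : ℕ) (hk : 0 < k) (hm : 0 < m) :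
    spow (spow a k) m = spow a (k * m) := by
  induction m with
  | zero => omega
  | succ m ih =>
    cases Nat.eq_zero_or_pos m with
    | inl h => subst h; simp [spow]
    | inr h =>
      rw [spow_succ' _ m h, ih h, show k * (m+1) = k*m + k by ring,
        spow_add' a (k*m) k (by positivity) hk]

lemma comm_spow [Semigroup S] {a c : S} (h : c * a = a * c) (n : ℕ) :
    c * spow a n = spow a n * c := by
  induction n with
  | zero => exact h
  | succ n ih =>
    cases n with
    | zero => exact h
    | succ m =>
      show c * (spow a (m+1) * a) = (spow a (m+1) * a) * c
      rw [← mul_assoc, ih, mul_assoc, h, mul_assoc]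

lemma isEP_spow [Semigroup S] [StarMul S] {b : S} (hb : IsEP b) (k : ℕ) (hk : 0 < k) :
    IsEP (spow b k) := by
  obtain ⟨x, ⟨h1, h2, h3⟩, _, _, h4, h5⟩ := hb
  -- key products
  have hbx : ∀ n, 0 < n → spow b n * spow x n = b * x := by
    intro n hn
    induction n with
    | zero => omega
    | succ n ih =>
      cases Nat.eq_zero_or_pos n with
      | inl h => subst h; rfl
      | inr h =>
        rw [spow_succ' b n h, spow_succ' x n h]
        calc spow b n * b * (spow x n * x)
            = spow b n * (b * spow x n) * x := by simp [mul_assoc]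
          _ = spow b n * (spow x n * b) * x := by rw [comm_spow h3]
          _ = (spow b n * spow x n) * (b * x) := by simp [mul_assoc]
          _ = (b * x) * (b * x) := by rw [ih h]
          _ = b * x := by rw [← mul_assoc, h1]
  have hxb : ∀ n, 0 < n → spow x n * spow b n = x * b := by
    intro n hn
    induction n with
    | zero => omega
    | succ n ih =>
      cases Nat.eq_zero_or_pos n with
      | inl h => subst h; rfl
      | inr h =>
        rw [spow_succ' b n h, spow_succ' x n h]
        calc spow x n * x * (spow b n * b)
            = spow x n * (x * spow b n) * b := by simp [mul_assoc]
          _ = spow x n * (spow b n * x) * b := by rw [comm_spow h3.symm]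
          _ = (spow x n * spow b n) * (x * b) := by simp [mul_assoc]
          _ = (x * b) * (x * b) := by rw [ih h]
          _ = x * b := by rw [← mul_assoc, h2]
  have hbxb : ∀ n, 0 < n → (b * x) * spow b n = spow b n := by
    intro n hn
    induction n with
    | zero => omega
    | succ n ih =>
      cases Nat.eq_zero_or_pos n with
      | inl h => subst h; exact h1
      | inr h =>
        rw [spow_succ' b n h, ← mul_assoc, ih h]
  have hxbx : ∀ n, 0 < n → (x * b) * spow x n = spow x n := by
    intro n hn
    induction n with
    | zero => omega
    | succ n ih =>
      cases Nat.eq_zero_or_pos n with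
      | inl h => subst h; exact h2
      | inr h =>
        rw [spow_succ' x n h, ← mul_assoc, ih h]
  have e1 : spow b k * spow x k * spow b k = spow b k := by
    rw [hbx k hk, hbxb k hk]
  have e2 : spow x k * spow b k * spow x k = spow x k := by
    rw [hxb k hk, hxbx k hk]
  have e3 : spow b k * spow x k = spow x k * spow b k := by
    rw [hbx k hk, hxb k hk, h3]
  have e4 : star (spow b k * spow x k) = spow b k * spow x k := by
    rw [hbx k hk, h4]
  have e5 : star (spow x k * spow b k) = spow x k * spow b k := by
    rw [hxb k hk, h5]
  exact ⟨spow x k, ⟨e1, e2, e3⟩, e1, e2, e4, e5⟩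

/-- Theorem 2.14: `a` is *-DMP iff `a^k` is *-DMP, for any positive integer `k`. -/
theorem stmt_8 [Semigroup S] [StarMul S] (a : S) (k : ℕ) (hk : 0 < k) :
    IsStarDMP a ↔ IsStarDMP (spow a k) := by
  constructor
  · rintro ⟨m, hm, hEP⟩
    refine ⟨m, hm, ?_⟩
    rw [spow_spow a k m hk hm, show k * m = m * k by ring,
      ← spow_spow a m k hm hk]
    exact isEP_spow hEP k hk
  · rintro ⟨m, hm, hEP⟩
    rw [spow_spow a k m hk hm] at hEP
    exact ⟨k * m, by positivity, hEP⟩
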